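/- Let n ∈ ℕ and let W = {w_1, …, w_n}, M = {m_1, …, m_n}, W' = {w'_1, …, w'_n}, M' = {m'_1, …, m'_n} be pairwise disjoint sets. Let μ_id be the perfect marriage between W and M marrying w_i to m_i for every i, and let μ_id' be the perfect marriage between W ∪ W' and M ∪ M' marrying w_i to m_i and w'_i to m'_i for every i. Given a profile P_W of partial preference lists for W over M and a profile P_M for M over W, define full preference lists on W ∪ W' over M ∪ M': the list of w_i is her list in P_W, followed by m'_i, followed by all remaining men sorted by index; the list of w'_i is m_i followed by all remaining men sorted by index; symmetrically for the men. Then: (a) if μ_id is the unique stable marriage with respect to P_W and P_M, then μ_id' is the unique stable marriage with respect to the constructed full preference lists; and (b) if μ_id is unstable with respect to P_W and P_M, then μ_id' is unstable with respect to the constructed full preference lists. -/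

import Mathlib

/-- `listPref l a b`: in the (possibly partial) preference list `l`
(most-preferred first), `a` is preferred over `b`: `a` is on the list, and
either `b` is not on the list or `a` precedes `b` on it. -/
def listPref {α : Type} [DecidableEq α] (l : List α) (a b : α) : Prop :=
  a ∈ l ∧ (b ∈ l → l.idxOf a < l.idxOf b)

/-- A marriage between (a subset of) the women `Fin nw` and (a subset of) the
men `Fin nm`: `μ i = some j` means woman `i` is married to man `j`, and
`μ i = none` means woman `i` is single; no two women share a husband. -/
def IsMarriage {nw nm : ℕ} (μ : Fin nw → Option (Fin nm)) : Prop :=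
  ∀ i i' j, μ i = some j → μ i' = some j → i = i'

/-- Stability of a marriage `μ` with respect to (possibly partial) preference
lists `wL` (women's lists of men) and `mL` (men's lists of women): every married
participant is married to someone on their own list, and there is no blocking
pair, i.e. no pair `(i, j)`, with `j` on `i`'s list and `i` on `j`'s list, such
that woman `i` is single or prefers `j` over her spouse, and man `j` is single
or prefers `i` over his spouse. -/
def StableL {nw nm : ℕ} (wL : Fin nw → List (Fin nm)) (mL : Fin nm → List (Fin nw))
    (μ : Fin nw → Option (Fin nm)) : Prop :=
  (∀ i j, μ i = some j → j ∈ wL i ∧ i ∈ mL j) ∧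
  ¬∃ (i : Fin nw) (j : Fin nm),
      j ∈ wL i ∧ i ∈ mL j ∧
      (∀ j', μ i = some j' → listPref (wL i) j j') ∧
      (∀ i', μ i' = some j → listPref (mL j) i i')

/-- Append to the list `l` all the remaining elements of `Fin N`, sorted by index. -/
def completeL {N : ℕ} (l : List (Fin N)) : List (Fin N) :=
  l ++ (List.finRange N).filter (fun a => !(l.contains a))

/-- Extension of a profile `L` of partial preference lists on `Fin n` to a profile
of full preference lists on `Fin (n + n)`.  On each side, participant `i < n` is
an original participant (`w_{i+1}` resp. `m_{j+1}`) and participant `n + i` is a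
primed participant (`w'_{i+1}` resp. `m'_{j+1}`).  The full list of `w_i` is her
original list (in the same order), then `m'_i`, then all remaining men sorted by
index; the full list of `w'_i` is `m_i` followed by all remaining men sorted by
index.  The men's lists are extended by the same construction. -/
def extL (n : ℕ) (L : Fin n → List (Fin n)) : Fin (n + n) → List (Fin (n + n)) :=
  fun i =>
    if h : i.val < n then
      completeL (((L ⟨i.val, h⟩).map (Fin.castAdd n)) ++ [Fin.natAdd n ⟨i.val, h⟩])
    else
      completeL [Fin.castAdd n ⟨i.val - n, by have := i.isLt; omega⟩]

/-!
The primed participants act as outside options. Woman `w_i` ranks `m'_i` right after her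
original list and `m'_i` ranks `w_i` first (dually for `m_j` and `w'_j`), so in a stable
marriage of the extended instance each `w_i` is married to an acceptable original man or to
`m'_i`, and each `m_j` to an acceptable original woman or to `w'_j`. Hence a stable marriage
restricts to a stable marriage of the original instance, which by uniqueness is `μ_id`; the
primed participants left over all rank each other by index, and a lowest-indexed `w'_k` not
married to `m'_k` would form a blocking pair with him. Conversely, an unstable `μ_id` has
either an original blocking pair, which still blocks `μ_id'`, or an `i` unacceptable to `w_i`
(resp. `m_i`), and then `(w_i, m'_i)` (resp. `(w'_i, m_i)`) blocks `μ_id'`.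
-/

open Function
open Fin (castAdd natAdd)

section listPref

variable {α : Type} [DecidableEq α] {l l₁ l₂ : List α} {a b : α}

lemma listPref_irrefl (a : α) : ¬listPref l a a :=
  fun h => lt_irrefl _ (h.2 h.1)

lemma listPref.asymm (h : listPref l a b) : ¬listPref l b a :=
  fun h' => lt_asymm (h.2 h'.1) (h'.2 h.1)

lemma listPref_append_of_mem_of_notMem (ha : a ∈ l₁) (hb : b ∉ l₁) :
    listPref (l₁ ++ l₂) a b := by
  refine ⟨List.mem_append_left _ ha, fun _ => ?_⟩
  rw [List.idxOf_append_of_mem ha, List.idxOf_append_of_notMem hb]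
  exact (List.idxOf_lt_length_iff.2 ha).trans_le (Nat.le_add_right _ _)

lemma listPref.append (h : listPref l₁ a b) (l₂ : List α) : listPref (l₁ ++ l₂) a b := by
  by_cases hb : b ∈ l₁
  · refine ⟨List.mem_append_left _ h.1, fun _ => ?_⟩
    rw [List.idxOf_append_of_mem h.1, List.idxOf_append_of_mem hb]
    exact h.2 hb
  · exact listPref_append_of_mem_of_notMem h.1 hb

lemma listPref.of_append (hb : b ∈ l₁) (h : listPref (l₁ ++ l₂) a b) : listPref l₁ a b := by
  have hlt := h.2 (List.mem_append_left _ hb)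
  rw [List.idxOf_append_of_mem hb] at hlt
  have ha : a ∈ l₁ := by
    by_contra ha
    rw [List.idxOf_append_of_notMem ha] at hlt
    have := List.idxOf_lt_length_iff.2 hb
    omega
  rw [List.idxOf_append_of_mem ha] at hlt
  exact ⟨ha, fun _ => hlt⟩

lemma listPref.append_left (h : listPref l₂ a b) (ha : a ∉ l₁) (hb : b ∉ l₁) :
    listPref (l₁ ++ l₂) a b := by
  refine ⟨List.mem_append_right _ h.1, fun hb' => ?_⟩
  rw [List.idxOf_append_of_notMem ha, List.idxOf_append_of_notMem hb]
  exact Nat.add_lt_add_left (h.2 ((List.mem_append.1 hb').resolve_left hb)) _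

lemma List.idxOf_map_of_injective {β : Type} [DecidableEq β] {f : α → β} (hf : Injective f)
    (l : List α) (a : α) : (l.map f).idxOf (f a) = l.idxOf a := by
  induction l with
  | nil => rfl
  | cons c l ih => by_cases h : c = a <;> simp [h, hf.eq_iff, ih]

lemma listPref_map_iff {β : Type} [DecidableEq β] {f : α → β} (hf : Injective f) :
    listPref (l.map f) (f a) (f b) ↔ listPref l a b := by
  simp only [listPref, List.mem_map_of_injective hf, List.idxOf_map_of_injective hf]

lemma listPref_of_pairwise_lt [Preorder α] (hl : l.Pairwise (· < ·)) (ha : a ∈ l) (hb : b ∈ l)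
    (hab : a < b) : listPref l a b := by
  refine ⟨ha, fun _ => ?_⟩
  have hia := List.idxOf_lt_length_iff.2 ha
  have hib := List.idxOf_lt_length_iff.2 hb
  by_contra hle
  rcases (not_lt.1 hle).lt_or_eq with hlt | heq
  · have hba := List.pairwise_iff_getElem.1 hl _ _ hib hia hlt
    rw [List.getElem_idxOf, List.getElem_idxOf] at hba
    exact lt_asymm hab hba
  · exact hab.ne ((List.idxOf_inj hb).1 heq).symm

end listPref

section completeL

variable {N : ℕ} {l : List (Fin N)} {a b : Fin N}

lemma mem_completeL (l : List (Fin N)) (a : Fin N) : a ∈ completeL l := by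
  by_cases h : a ∈ l
  · exact List.mem_append_left _ h
  · exact List.mem_append_right _ (by simp [h])

lemma listPref_completeL_of_lt (ha : a ∉ l) (hb : b ∉ l) (hab : a < b) :
    listPref (completeL l) a b :=
  (listPref_of_pairwise_lt ((List.pairwise_lt_finRange N).filter _) (by simpa) (by simpa)
    hab).append_left ha hb

end completeL

section extL

variable {n : ℕ} {L : Fin n → List (Fin n)}

lemma castAdd_ne_natAdd (a k : Fin n) : castAdd n a ≠ natAdd n k := by
  rw [Ne, Fin.ext_iff, Fin.val_castAdd, Fin.val_natAdd]
  omega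

lemma extL_castAdd (L : Fin n → List (Fin n)) (i : Fin n) :
    extL n L (castAdd n i) = completeL ((L i).map (castAdd n) ++ [natAdd n i]) := by
  simp [extL]

lemma extL_natAdd (L : Fin n → List (Fin n)) (k : Fin n) :
    extL n L (natAdd n k) = completeL [castAdd n k] := by
  simp [extL]

lemma mem_extL (L : Fin n → List (Fin n)) (i x : Fin (n + n)) : x ∈ extL n L i := by
  unfold extL
  split <;> exact mem_completeL _ _

lemma listPref_extL_castAdd_of_listPref {i a b : Fin n} (h : listPref (L i) a b) :
    listPref (extL n L (castAdd n i)) (castAdd n a) (castAdd n b) := by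
  rw [extL_castAdd]
  exact (((listPref_map_iff (Fin.castAdd_injective n n)).2 h).append _).append _

lemma listPref_of_listPref_extL_castAdd {i a b : Fin n} (hb : b ∈ L i)
    (h : listPref (extL n L (castAdd n i)) (castAdd n a) (castAdd n b)) : listPref (L i) a b := by
  have hb' : castAdd n b ∈ (L i).map (castAdd n) := List.mem_map_of_mem hb
  rw [extL_castAdd] at h
  exact (listPref_map_iff (Fin.castAdd_injective n n)).1
    ((h.of_append (List.mem_append_left _ hb')).of_append hb')

lemma natAdd_notMem_map_castAdd (l : List (Fin n)) (k : Fin n) :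
    natAdd n k ∉ l.map (castAdd n) := by
  rw [List.mem_map]
  rintro ⟨a, -, h⟩
  exact castAdd_ne_natAdd a k h

lemma listPref_extL_castAdd_castAdd_natAdd {i a : Fin n} (ha : a ∈ L i) (k : Fin n) :
    listPref (extL n L (castAdd n i)) (castAdd n a) (natAdd n k) := by
  rw [extL_castAdd]
  exact (listPref_append_of_mem_of_notMem (List.mem_map_of_mem ha)
    (natAdd_notMem_map_castAdd _ _)).append _

lemma listPref_extL_castAdd_natAdd_self_castAdd {i b : Fin n} (hb : b ∉ L i) :
    listPref (extL n L (castAdd n i)) (natAdd n i) (castAdd n b) := by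
  rw [extL_castAdd]
  refine listPref_append_of_mem_of_notMem (by simp) ?_
  rw [List.mem_append, List.mem_map_of_injective (Fin.castAdd_injective n n),
    List.mem_singleton]
  exact fun h => h.elim hb (castAdd_ne_natAdd b i)

lemma listPref_extL_castAdd_natAdd_self_natAdd {i k : Fin n} (hk : k ≠ i) :
    listPref (extL n L (castAdd n i)) (natAdd n i) (natAdd n k) := by
  rw [extL_castAdd]
  refine listPref_append_of_mem_of_notMem (by simp) ?_
  rw [List.mem_append, List.mem_singleton, Fin.natAdd_inj]
  exact fun h => h.elim (natAdd_notMem_map_castAdd _ _) hk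

lemma listPref_extL_natAdd_castAdd_self {k : Fin n} {x : Fin (n + n)} (hx : x ≠ castAdd n k) :
    listPref (extL n L (natAdd n k)) (castAdd n k) x := by
  rw [extL_natAdd]
  exact listPref_append_of_mem_of_notMem (List.mem_singleton_self _) (by simpa using hx)

lemma listPref_extL_natAdd_natAdd_of_lt {k l : Fin n} (hkl : k < l) :
    listPref (extL n L (natAdd n k)) (natAdd n k) (natAdd n l) := by
  rw [extL_natAdd]
  exact listPref_completeL_of_lt (List.mem_singleton.not.2 (castAdd_ne_natAdd _ _).symm)
    (List.mem_singleton.not.2 (castAdd_ne_natAdd _ _).symm) ((Fin.natAdd_lt_natAdd_iff n).2 hkl)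

lemma lt_of_listPref_extL_natAdd_natAdd {k l : Fin n}
    (h : listPref (extL n L (natAdd n k)) (natAdd n l) (natAdd n k)) : l < k := by
  rcases lt_trichotomy l k with hlk | rfl | hkl
  · exact hlk
  · exact absurd h (listPref_irrefl _)
  · exact absurd h (listPref_extL_natAdd_natAdd_of_lt hkl).asymm

end extL

lemma stableL_id_iff {N : ℕ} {wL mL : Fin N → List (Fin N)} :
    StableL wL mL (fun i => some i) ↔
      (∀ i, i ∈ wL i ∧ i ∈ mL i) ∧ ∀ i j, listPref (wL i) j i → ¬listPref (mL j) i j := by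
  constructor
  · rintro ⟨hacc, hblock⟩
    refine ⟨fun i => hacc i i rfl, fun i j hw hm => hblock ⟨i, j, hw.1, hm.1, ?_, ?_⟩⟩
    · rintro _ ⟨⟩
      exact hw
    · rintro _ ⟨⟩
      exact hm
  · rintro ⟨hacc, hblock⟩
    refine ⟨by rintro i _ ⟨⟩; exact hacc i, ?_⟩
    rintro ⟨i, j, -, -, hw, hm⟩
    exact hblock i j (hw i rfl) (hm j rfl)

section extension

variable {n : ℕ} {wL mL : Fin n → List (Fin n)}

lemma stableL_id_extL (h : StableL wL mL (fun i => some i)) :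
    StableL (extL n wL) (extL n mL) (fun i => some i) := by
  rw [stableL_id_iff] at h ⊢
  obtain ⟨hacc, hblock⟩ := h
  refine ⟨fun _ => ⟨mem_extL _ _ _, mem_extL _ _ _⟩, fun x y hw hm => ?_⟩
  induction x using Fin.addCases with
  | left i =>
    induction y using Fin.addCases with
    | left j =>
      exact hblock i j (listPref_of_listPref_extL_castAdd (hacc i).1 hw)
        (listPref_of_listPref_extL_castAdd (hacc j).2 hm)
    | right l => exact (listPref_extL_castAdd_castAdd_natAdd (hacc i).1 l).asymm hw
  | right k =>
    induction y using Fin.addCases with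
    | left j => exact (listPref_extL_castAdd_castAdd_natAdd (hacc j).2 k).asymm hm
    | right l =>
      exact lt_asymm (lt_of_listPref_extL_natAdd_natAdd hw) (lt_of_listPref_extL_natAdd_natAdd hm)

lemma stableL_id_of_stableL_id_extL (h : StableL (extL n wL) (extL n mL) (fun i => some i)) :
    StableL wL mL (fun i => some i) := by
  rw [stableL_id_iff] at h ⊢
  obtain ⟨-, hblock⟩ := h
  refine ⟨fun i => ⟨?_, ?_⟩, fun i j hw hm => hblock _ _
    (listPref_extL_castAdd_of_listPref hw) (listPref_extL_castAdd_of_listPref hm)⟩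
  · by_contra hi
    exact hblock (castAdd n i) (natAdd n i) (listPref_extL_castAdd_natAdd_self_castAdd hi)
      (listPref_extL_natAdd_castAdd_self (castAdd_ne_natAdd i i).symm)
  · by_contra hi
    exact hblock (natAdd n i) (castAdd n i)
      (listPref_extL_natAdd_castAdd_self (castAdd_ne_natAdd i i).symm)
      (listPref_extL_castAdd_natAdd_self_castAdd hi)

variable {μ : Fin (n + n) → Option (Fin (n + n))}

lemma StableL.extL_no_blocking_pair (hμ : StableL (extL n wL) (extL n mL) μ) {x y : Fin (n + n)}
    (hw : ∀ y', μ x = some y' → listPref (extL n wL x) y y')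
    (hm : ∀ x', μ x' = some y → listPref (extL n mL y) x x') : False :=
  hμ.2 ⟨x, y, mem_extL _ _ _, mem_extL _ _ _, hw, hm⟩

lemma extL_spouse_castAdd (hμ : StableL (extL n wL) (extL n mL) μ) (i : Fin n) :
    μ (castAdd n i) = some (natAdd n i) ∨ ∃ j ∈ wL i, μ (castAdd n i) = some (castAdd n j) := by
  by_contra! h
  obtain ⟨hne, hnot⟩ := h
  refine hμ.extL_no_blocking_pair (x := castAdd n i) (y := natAdd n i) (fun y hy => ?_)
    (fun x hx => listPref_extL_natAdd_castAdd_self fun hx' => hne (hx' ▸ hx))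
  induction y using Fin.addCases with
  | left j => exact listPref_extL_castAdd_natAdd_self_castAdd fun hj => hnot j hj hy
  | right k => exact listPref_extL_castAdd_natAdd_self_natAdd fun hk => hne (hk ▸ hy)

lemma extL_spouse_of_eq_castAdd (hmar : IsMarriage μ) (hμ : StableL (extL n wL) (extL n mL) μ)
    {x : Fin (n + n)} {j : Fin n} (hx : μ x = some (castAdd n j)) :
    x = natAdd n j ∨ ∃ i ∈ mL j, x = castAdd n i := by
  by_contra! h
  obtain ⟨hne, hnot⟩ := h
  refine hμ.extL_no_blocking_pair (x := natAdd n j) (y := castAdd n j)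
    (fun y hy => listPref_extL_natAdd_castAdd_self fun hy' => hne (hmar _ _ _ hx (hy' ▸ hy)))
    (fun x' hx' => ?_)
  rw [hmar _ _ _ hx' hx]
  induction x using Fin.addCases with
  | left i => exact listPref_extL_castAdd_natAdd_self_castAdd fun hi => hnot i hi rfl
  | right k => exact listPref_extL_castAdd_natAdd_self_natAdd fun hk => hne (hk ▸ rfl)

-- A woman `w_i` married to a primed man becomes single.
def restrictMarriage (μ : Fin (n + n) → Option (Fin (n + n))) : Fin n → Option (Fin n) :=
  fun i => (μ (castAdd n i)).bind (Fin.addCases some fun _ => none)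

lemma restrictMarriage_eq_some {i j : Fin n} :
    restrictMarriage μ i = some j ↔ μ (castAdd n i) = some (castAdd n j) := by
  unfold restrictMarriage
  cases μ (castAdd n i) with
  | none => simp
  | some y =>
    induction y using Fin.addCases with
    | left j' => simp [Fin.castAdd_inj]
    | right k =>
      rw [Option.bind_some, Fin.addCases_right]
      exact iff_of_false (Option.some_ne_none j).symm
        fun h => castAdd_ne_natAdd j k (Option.some.inj h).symm

lemma IsMarriage.restrictMarriage (hmar : IsMarriage μ) : IsMarriage (restrictMarriage μ) :=
  fun _ _ _ h h' => Fin.castAdd_injective n n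
    (hmar _ _ _ (restrictMarriage_eq_some.1 h) (restrictMarriage_eq_some.1 h'))

lemma StableL.restrictMarriage (hmar : IsMarriage μ) (hμ : StableL (extL n wL) (extL n mL) μ) :
    StableL wL mL (restrictMarriage μ) := by
  refine ⟨fun i j hij => ?_, ?_⟩
  · rw [restrictMarriage_eq_some] at hij
    refine ⟨?_, ?_⟩
    · rcases extL_spouse_castAdd hμ i with h | ⟨j', hj', h⟩
      · exact absurd (Option.some.inj (hij.symm.trans h)) (castAdd_ne_natAdd j i)
      · rwa [Fin.castAdd_injective n n (Option.some.inj (hij.symm.trans h))]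
    · rcases extL_spouse_of_eq_castAdd hmar hμ hij with h | ⟨i', hi', h⟩
      · exact absurd h (castAdd_ne_natAdd i j)
      · rwa [Fin.castAdd_injective n n h]
  · rintro ⟨i, j, hj, hi, hw, hm⟩
    refine hμ.extL_no_blocking_pair (x := castAdd n i) (y := castAdd n j) (fun y hy => ?_)
      (fun x hx => ?_)
    · induction y using Fin.addCases with
      | left j' => exact listPref_extL_castAdd_of_listPref (hw j' (restrictMarriage_eq_some.2 hy))
      | right k => exact listPref_extL_castAdd_castAdd_natAdd hj k
    · induction x using Fin.addCases with
      | left i' => exact listPref_extL_castAdd_of_listPref (hm i' (restrictMarriage_eq_some.2 hx))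
      | right k => exact listPref_extL_castAdd_castAdd_natAdd hi k

lemma extL_natAdd_eq_of_castAdd (hmar : IsMarriage μ) (hμ : StableL (extL n wL) (extL n mL) μ)
    (hcast : ∀ i, μ (castAdd n i) = some (castAdd n i)) (k : Fin n) :
    μ (natAdd n k) = some (natAdd n k) := by
  induction k using WellFoundedLT.induction with
  | _ k ih =>
    by_contra hne
    have lt_of_matched : ∀ l, l ≠ k →
        (μ (natAdd n k) = some (natAdd n l) ∨ μ (natAdd n l) = some (natAdd n k)) → k < l := by
      intro l hlk h
      refine (lt_or_gt_of_ne hlk).resolve_left fun hl => hlk ?_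
      rcases h with h | h
      · exact ((Fin.natAdd_inj n).1 (hmar _ _ _ h (ih l hl))).symm
      · exact (Fin.natAdd_inj n).1 (Option.some.inj ((ih l hl).symm.trans h))
    refine hμ.extL_no_blocking_pair (x := natAdd n k) (y := natAdd n k) (fun y hy => ?_)
      (fun x hx => ?_)
    · induction y using Fin.addCases with
      | left j => exact absurd (hmar _ _ _ hy (hcast j)) (castAdd_ne_natAdd j k).symm
      | right l =>
        exact listPref_extL_natAdd_natAdd_of_lt
          (lt_of_matched l (fun h => hne (h ▸ hy)) (Or.inl hy))
    · induction x using Fin.addCases with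
      | left i => exact absurd (Option.some.inj ((hcast i).symm.trans hx)) (castAdd_ne_natAdd i k)
      | right l =>
        exact listPref_extL_natAdd_natAdd_of_lt
          (lt_of_matched l (fun h => hne (h ▸ hx)) (Or.inr hx))

lemma eq_id_of_stableL_extL
    (huniq : ∀ ν : Fin n → Option (Fin n), IsMarriage ν → StableL wL mL ν → ν = fun i => some i)
    (hmar : IsMarriage μ) (hμ : StableL (extL n wL) (extL n mL) μ) : μ = fun x => some x := by
  have hcast : ∀ i, μ (castAdd n i) = some (castAdd n i) := fun i =>
    restrictMarriage_eq_some.1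
      (congrFun (huniq _ hmar.restrictMarriage (hμ.restrictMarriage hmar)) i)
  funext x
  induction x using Fin.addCases with
  | left i => exact hcast i
  | right k => exact extL_natAdd_eq_of_castAdd hmar hμ hcast k

end extension

theorem extended_identity_unique_stable_or_unstable_general (n : ℕ)
    (wL : Fin n → List (Fin n)) (mL : Fin n → List (Fin n)) :
    ((StableL wL mL (fun i => some i) ∧
        ∀ μ : Fin n → Option (Fin n), IsMarriage μ →
          StableL wL mL μ → μ = fun i => some i) →
      (StableL (extL n wL) (extL n mL) (fun i => some i) ∧
        ∀ μ : Fin (n + n) → Option (Fin (n + n)), IsMarriage μ →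
          StableL (extL n wL) (extL n mL) μ → μ = fun i => some i)) ∧
    (¬StableL wL mL (fun i => some i) →
      ¬StableL (extL n wL) (extL n mL) (fun i => some i)) :=
  ⟨fun ⟨hstab, huniq⟩ =>
      ⟨stableL_id_extL hstab, fun _ hmar hμ => eq_id_of_stableL_extL huniq hmar hμ⟩,
    mt stableL_id_of_stableL_id_extL⟩

/-- Let `μ_id` be the marriage marrying `w_i` to `m_i` for every `i`, and `μ_id'`
the perfect marriage on `W ∪ W'` and `M ∪ M'` marrying `w_i` to `m_i` and `w'_i`
to `m'_i` for every `i` (under the indexing of `extL`, both are the identity).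
(a) If `μ_id` is the unique stable marriage with respect to the (possibly partial,
duplicate-free) profiles `wL`, `mL`, then `μ_id'` is the unique stable marriage
with respect to the constructed full preference lists; (b) if `μ_id` is unstable
with respect to `wL`, `mL`, then `μ_id'` is unstable with respect to the
constructed full preference lists. -/
theorem extended_identity_unique_stable_or_unstable (n : ℕ)
    (wL : Fin n → List (Fin n)) (mL : Fin n → List (Fin n))
    (hw : ∀ i, (wL i).Nodup) (hm : ∀ j, (mL j).Nodup) :
    ((StableL wL mL (fun i => some i) ∧
        ∀ μ : Fin n → Option (Fin n), IsMarriage μ →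
          StableL wL mL μ → μ = fun i => some i) →
      (StableL (extL n wL) (extL n mL) (fun i => some i) ∧
        ∀ μ : Fin (n + n) → Option (Fin (n + n)), IsMarriage μ →
          StableL (extL n wL) (extL n mL) μ → μ = fun i => some i)) ∧
    (¬StableL wL mL (fun i => some i) →
      ¬StableL (extL n wL) (extL n mL) (fun i => some i)) :=
  extended_identity_unique_stable_or_unstable_general n wL mL
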